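/- arXiv:2203.06442 — 3 statements merged into one kernel-verified Lean document; each statement's English description precedes it below -/
import Mathlib

section
/- A function f : ℝ^{d×m} → ℝ^{m'} is invariant under left multiplication by orthogonal matrices (f(OZ) = f(Z) for all O ∈ O(d)) if and only if there exists a function g : ℝ^{m×m} → ℝ^{m'} such that f(Z) = g(ZᵀZ) for all Z. -/
/-!
If `ZᵀZ = WᵀW`, then `Z x ↦ W x` is a well-defined linear isometry from the column space of `Z`
into `ℝᵈ`; extending it to an isometry of `ℝᵈ` gives an orthogonal `O` with `O Z = W`. So an
orthogonally invariant `f` is constant on the fibres of `Z ↦ ZᵀZ` and factors through it.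
Conversely `(O Z)ᵀ (O Z) = ZᵀZ` whenever `OᵀO = 1`.
-/

open Matrix

open scoped InnerProductSpace

namespace LinearMap

section

variable {R M M₂ M₃ : Type*} [Ring R] [AddCommGroup M] [Module R M] [AddCommGroup M₂] [Module R M₂]
  [AddCommGroup M₃] [Module R M₃]

theorem exists_comp_rangeRestrict_eq_of_ker_le {f : M →ₗ[R] M₂} {g : M →ₗ[R] M₃}
    (h : ker f ≤ ker g) : ∃ φ : range f →ₗ[R] M₃, φ ∘ₗ f.rangeRestrict = g :=
  ⟨(ker f).liftQ g h ∘ₗ f.quotKerEquivRange.symm.toLinearMap, by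
    ext x
    change (ker f).liftQ g h (f.quotKerEquivRange.symm ⟨f x, mem_range_self f x⟩) = g x
    rw [quotKerEquivRange_symm_apply_image, Submodule.mkQ_apply, Submodule.liftQ_apply]⟩

end

section

variable {𝕜 V E : Type*} [RCLike 𝕜] [AddCommGroup V] [Module 𝕜 V]
  [NormedAddCommGroup E] [InnerProductSpace 𝕜 E]

theorem ker_le_ker_of_inner_map_map_eq {T S : V →ₗ[𝕜] E}
    (h : ∀ x y, ⟪T x, T y⟫_𝕜 = ⟪S x, S y⟫_𝕜) : ker T ≤ ker S := by
  intro x hx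
  rw [mem_ker] at hx ⊢
  rw [← inner_self_eq_zero (𝕜 := 𝕜), ← h, hx, inner_zero_left]

theorem exists_linearIsometry_comp_eq_of_inner_map_map_eq [FiniteDimensional 𝕜 E]
    {T S : V →ₗ[𝕜] E} (h : ∀ x y, ⟪T x, T y⟫_𝕜 = ⟪S x, S y⟫_𝕜) :
    ∃ L : E →ₗᵢ[𝕜] E, L.toLinearMap ∘ₗ T = S := by
  obtain ⟨φ, hφ⟩ := exists_comp_rangeRestrict_eq_of_ker_le (ker_le_ker_of_inner_map_map_eq h)
  have hφ_inner : ∀ u v : range T, ⟪φ u, φ v⟫_𝕜 = ⟪u, v⟫_𝕜 := by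
    rintro ⟨_, x, rfl⟩ ⟨_, y, rfl⟩
    change ⟪φ (T.rangeRestrict x), φ (T.rangeRestrict y)⟫_𝕜 = ⟪T x, T y⟫_𝕜
    rw [← comp_apply, ← comp_apply, hφ, h]
  refine ⟨(φ.isometryOfInner hφ_inner).extend, ?_⟩
  ext x
  change (φ.isometryOfInner hφ_inner).extend (T.rangeRestrict x) = S x
  rw [LinearIsometry.extend_apply, coe_isometryOfInner, ← comp_apply, hφ]

end

end LinearMap

namespace Matrix

variable {𝕜 m n : Type*} [RCLike 𝕜] [Fintype m] [DecidableEq m] [Fintype n] [DecidableEq n]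

theorem inner_toEuclideanLin_toEuclideanLin (A : Matrix m n 𝕜) (x y : EuclideanSpace 𝕜 n) :
    ⟪toEuclideanLin A x, toEuclideanLin A y⟫_𝕜 = ⟪x, toEuclideanLin (Aᴴ * A) y⟫_𝕜 := by
  rw [toLpLin_mul_same, toEuclideanLin_conjTranspose_eq_adjoint, LinearMap.comp_apply,
    LinearMap.adjoint_inner_right]

theorem conjTranspose_mul_self_eq_iff_inner_toEuclideanLin_eq (A B : Matrix m n 𝕜) :
    Aᴴ * A = Bᴴ * B ↔ ∀ x y : EuclideanSpace 𝕜 n,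
      ⟪toEuclideanLin A x, toEuclideanLin A y⟫_𝕜 = ⟪toEuclideanLin B x, toEuclideanLin B y⟫_𝕜 := by
  simp only [inner_toEuclideanLin_toEuclideanLin]
  refine ⟨fun h x y => by rw [h], fun h => toEuclideanLin.injective ?_⟩
  exact LinearMap.ext fun y => ext_inner_left 𝕜 fun x => h x y

theorem exists_mem_unitaryGroup_mul_eq_of_conjTranspose_mul_self_eq {A B : Matrix m n 𝕜}
    (h : Aᴴ * A = Bᴴ * B) : ∃ U ∈ unitaryGroup m 𝕜, U * A = B := by
  obtain ⟨L, hL⟩ := LinearMap.exists_linearIsometry_comp_eq_of_inner_map_map_eq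
    ((conjTranspose_mul_self_eq_iff_inner_toEuclideanLin_eq A B).mp h)
  set U := toEuclideanLin.symm L.toLinearMap
  have hUL : toEuclideanLin U = L.toLinearMap := toEuclideanLin.apply_symm_apply _
  refine ⟨U, ?_, toEuclideanLin.injective ?_⟩
  · have : Uᴴ * U = (1 : Matrix m m 𝕜)ᴴ * 1 :=
      (conjTranspose_mul_self_eq_iff_inner_toEuclideanLin_eq U 1).mpr fun x y => by
        simp [hUL, L.inner_map_map]
    rwa [conjTranspose_one, Matrix.mul_one, ← star_eq_conjTranspose, ← mem_unitaryGroup_iff'] at this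
  · rw [toLpLin_mul_same, hUL, hL]

theorem exists_orthogonal_mul_eq_of_transpose_mul_self_eq
    {A B : Matrix m n ℝ} (h : Aᵀ * A = Bᵀ * B) : ∃ O : Matrix m m ℝ, Oᵀ * O = 1 ∧ O * A = B := by
  simp only [← conjTranspose_eq_transpose_of_trivial] at h ⊢
  obtain ⟨O, hO, hOA⟩ := exists_mem_unitaryGroup_mul_eq_of_conjTranspose_mul_self_eq h
  exact ⟨O, mem_unitaryGroup_iff'.mp hO, hOA⟩

end Matrix

theorem orth_invariant_iff_fn_of_gram {d m m' : ℕ}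
    (f : Matrix (Fin d) (Fin m) ℝ → (Fin m' → ℝ)) :
    (∀ (O : Matrix (Fin d) (Fin d) ℝ) (Z : Matrix (Fin d) (Fin m) ℝ),
        Oᵀ * O = 1 → f (O * Z) = f Z) ↔
      ∃ g : Matrix (Fin m) (Fin m) ℝ → (Fin m' → ℝ),
        ∀ Z : Matrix (Fin d) (Fin m) ℝ, f Z = g (Zᵀ * Z) := by
  constructor
  · intro hf
    refine ⟨Function.extend (fun Z => Zᵀ * Z) f 0,
      fun Z => (Function.FactorsThrough.extend_apply ?_ _ Z).symm⟩
    intro Z W hZW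
    obtain ⟨O, hO, rfl⟩ := exists_orthogonal_mul_eq_of_transpose_mul_self_eq hZW
    exact (hf O Z hO).symm
  · rintro ⟨g, hg⟩ O Z hO
    rw [hg, hg Z, transpose_mul, Matrix.mul_assoc, ← Matrix.mul_assoc Oᵀ, hO, Matrix.one_mul]
end

section
/- If φ̂ : ℝ^{d×m} → ℝ^{d×m'} is orthogonality-equivariant (φ̂(OZ) = O φ̂(Z) for all O ∈ O(d)) and Z has full row rank d with m ≥ d, then there exists a function η : ℝ^{m×m} → ℝ^{m×m'} with φ̂(Z) = Z · η(ZᵀZ). -/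
open Matrix

lemma isUnit_of_rank_eq_card {n : ℕ} (A : Matrix (Fin n) (Fin n) ℝ) (h : A.rank = n) :
    IsUnit A := by
  rw [← Matrix.mulVec_surjective_iff_isUnit]
  have htop : LinearMap.range A.mulVecLin = ⊤ := by
    apply Submodule.eq_top_of_finrank_eq
    rw [← Matrix.rank, h, Module.finrank_fintype_fun_eq_card, Fintype.card_fin]
  intro v
  obtain ⟨w, hw⟩ := LinearMap.range_eq_top.mp htop v
  exact ⟨w, hw⟩

theorem equivariant_eq_mul_fn_of_gram {d m m' : ℕ} (hdm : d ≤ m)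
    (φ : Matrix (Fin d) (Fin m) ℝ → Matrix (Fin d) (Fin m') ℝ)
    (hequiv : ∀ (O : Matrix (Fin d) (Fin d) ℝ) (Z : Matrix (Fin d) (Fin m) ℝ),
      Oᵀ * O = 1 → φ (O * Z) = O * φ Z) :
    ∃ η : Matrix (Fin m) (Fin m) ℝ → Matrix (Fin m) (Fin m') ℝ,
      ∀ Z : Matrix (Fin d) (Fin m) ℝ, Z.rank = d → φ Z = Z * η (Zᵀ * Z) := by
  classical
  refine ⟨fun G =>
    if h : ∃ W : Matrix (Fin d) (Fin m) ℝ, W.rank = d ∧ Wᵀ * W = G then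
      (h.choose)ᵀ * (h.choose * (h.choose)ᵀ)⁻¹ * φ h.choose
    else 0, ?_⟩
  intro Z hZ
  have hex : ∃ W : Matrix (Fin d) (Fin m) ℝ, W.rank = d ∧ Wᵀ * W = Zᵀ * Z := ⟨Z, hZ, rfl⟩
  simp only [dif_pos hex]
  obtain ⟨hWrank, hWgram⟩ := hex.choose_spec
  set W := hex.choose with hWdef
  set A := Z * Zᵀ with hA
  have hAunit : IsUnit A := by
    apply isUnit_of_rank_eq_card
    rw [hA, Matrix.rank_self_mul_transpose, hZ]
  have hAdet : IsUnit A.det := (Matrix.isUnit_iff_isUnit_det A).mp hAunit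
  have hAinv : A * A⁻¹ = 1 := Matrix.mul_nonsing_inv A hAdet
  have hinvA : A⁻¹ * A = 1 := Matrix.nonsing_inv_mul A hAdet
  have hAsymm : Aᵀ = A := by rw [hA, transpose_mul, transpose_transpose]
  have hAinvsymm : (A⁻¹)ᵀ = A⁻¹ := by rw [Matrix.transpose_nonsing_inv, hAsymm]
  set O := W * Zᵀ * A⁻¹ with hO
  have hOT : Oᵀ = A⁻¹ * (Z * Wᵀ) := by
    rw [hO, transpose_mul, transpose_mul, hAinvsymm, transpose_transpose]
  -- Oᵀ * W = Z
  have hOTW : Oᵀ * W = Z := by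
    rw [hOT, Matrix.mul_assoc, Matrix.mul_assoc, hWgram, ← Matrix.mul_assoc Z, ← hA,
      ← Matrix.mul_assoc, hinvA, Matrix.one_mul]
  -- Wᵀ * O = Zᵀ
  have hWTO : Wᵀ * O = Zᵀ := by
    have := congrArg transpose hOTW
    rwa [transpose_mul, transpose_transpose] at this
  -- Oᵀ * O = 1
  have hOO : Oᵀ * O = 1 := by
    rw [hO, ← Matrix.mul_assoc, ← Matrix.mul_assoc, hOTW, ← hA, hAinv]
  -- W = O * Z
  have hWOZ : W = O * Z := by
    have hkey : (Wᵀ - Zᵀ * Oᵀ) * (W - O * Z) = 0 := by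
      have e1 : Zᵀ * Oᵀ * W = Zᵀ * Z := by rw [Matrix.mul_assoc, hOTW]
      have e2 : Wᵀ * (O * Z) = Zᵀ * Z := by rw [← Matrix.mul_assoc, hWTO]
      have e3 : Zᵀ * Oᵀ * (O * Z) = Zᵀ * Z := by
        rw [Matrix.mul_assoc, ← Matrix.mul_assoc Oᵀ, hOO, Matrix.one_mul]
      rw [Matrix.sub_mul, Matrix.mul_sub, Matrix.mul_sub, hWgram, e1, e2, e3]
      abel
    have hM : (W - O * Z)ᴴ * (W - O * Z) = 0 := by
      have h1 : (W - O * Z)ᴴ = Wᵀ - Zᵀ * Oᵀ := by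
        simp [conjTranspose_eq_transpose_of_trivial, transpose_sub, transpose_mul]
      rw [h1]; exact hkey
    exact sub_eq_zero.mp (Matrix.conjTranspose_mul_self_eq_zero.mp hM)
  have hWOZ' : W = O * Z := hWOZ
  -- O * Oᵀ = 1
  have hOOT : O * Oᵀ = 1 := mul_eq_one_comm.mp hOO
  -- φ W = O * φ Z
  have hphi : φ W = O * φ Z := by rw [hWOZ]; exact hequiv O Z hOO
  -- (W * Wᵀ)⁻¹ = O * A⁻¹ * Oᵀ
  have hWWT : W * Wᵀ = O * A * Oᵀ := by
    rw [hWOZ, transpose_mul, Matrix.mul_assoc O Z, ← Matrix.mul_assoc Z Zᵀ, ← hA,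
      ← Matrix.mul_assoc]
  have hWWTinv : (W * Wᵀ)⁻¹ = O * A⁻¹ * Oᵀ := by
    apply Matrix.inv_eq_right_inv
    rw [hWWT]
    calc O * A * Oᵀ * (O * A⁻¹ * Oᵀ)
        = O * A * (Oᵀ * O) * A⁻¹ * Oᵀ := by
          simp only [Matrix.mul_assoc]
      _ = 1 := by rw [hOO, Matrix.mul_one, Matrix.mul_assoc O A, hAinv, Matrix.mul_one, hOOT]
  -- finish
  rw [hphi, hWWTinv]
  simp only [← Matrix.mul_assoc]
  rw [Matrix.mul_assoc Z Wᵀ O, hWTO, ← hA, hAinv, Matrix.one_mul, hOO, Matrix.one_mul]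
end

section
/- The hinge acceleration formula is consistent with Newton's law: if a0 = (I + e1e1ᵀ + e2e2ᵀ)^{-1} a with a = f/m − θ̇1×ν1 − θ̇2×ν2 − (I−e1e1ᵀ)f1/m − (I−e2e2ᵀ)f2/m, and a1 = a0 + (x1×(f1−m a0))/(m‖x1‖²) × x1 + θ̇1×ν1, a2 defined analogously, then a0 + a1 + a2 = f/m where f = f0 + f1 + f2. -/
open Matrix

/-!
By `(x × w) × x = ‖x‖² (I - e eᵀ) w` with `e = x / ‖x‖`, the hinge term of `a_k` is
`(I - e_k e_kᵀ)(f_k / m - a0)`. Hence `a0 + a1 + a2 = (I + e1 e1ᵀ + e2 e2ᵀ) a0 + θ̇1 × ν1 + θ̇2 × ν2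
+ (I - e1 e1ᵀ) f1 / m + (I - e2 e2ᵀ) f2 / m`, and the first term is `a` by definition of `a0`, which
cancels everything but `f / m`.
-/

theorem sum_sq_eq_dotProduct_self {n R : Type*} [Fintype n] [CommSemiring R] (x : n → R) :
    ∑ i, x i ^ 2 = x ⬝ᵥ x := by
  simp only [dotProduct, sq]

theorem cross_cross_self {R : Type*} [CommRing R] (x w : Fin 3 → R) :
    x ⨯₃ w ⨯₃ x = (x ⬝ᵥ x) • w - (x ⬝ᵥ w) • x := by
  rw [cross_cross_eq_smul_sub_smul, dotProduct_comm w]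

theorem vecMulVec_inv_sqrt_smul_self {n : Type*} [Fintype n] (x : n → ℝ) :
    vecMulVec ((√(x ⬝ᵥ x))⁻¹ • x) ((√(x ⬝ᵥ x))⁻¹ • x) = (x ⬝ᵥ x)⁻¹ • vecMulVec x x := by
  have hxx : 0 ≤ x ⬝ᵥ x := dotProduct_self_star_nonneg x
  rw [smul_vecMulVec, vecMulVec_smul, smul_smul, ← mul_inv, Real.mul_self_sqrt hxx]

theorem posDef_one_add_vecMulVec_add_vecMulVec {n : Type*} [Fintype n] [DecidableEq n]
    (u v : n → ℝ) : (1 + vecMulVec u u + vecMulVec v v).PosDef :=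
  (PosDef.one.add_posSemidef (posSemidef_vecMulVec_self_star u)).add_posSemidef
    (posSemidef_vecMulVec_self_star v)

theorem inv_dotProduct_smul_cross_cross_self {x : Fin 3 → ℝ} (hx : x ≠ 0) (w : Fin 3 → ℝ) :
    ((x ⬝ᵥ x)⁻¹ • x ⨯₃ w) ⨯₃ x
      = (1 - vecMulVec ((√(x ⬝ᵥ x))⁻¹ • x) ((√(x ⬝ᵥ x))⁻¹ • x)) *ᵥ w := by
  have hxx : x ⬝ᵥ x ≠ 0 := dotProduct_self_eq_zero.not.mpr hx
  rw [LinearMap.map_smul₂, cross_cross_self, vecMulVec_inv_sqrt_smul_self, sub_mulVec,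
    one_mulVec, smul_mulVec, vecMulVec_mulVec, op_smul_eq_smul, smul_sub, smul_smul, inv_mul_cancel₀ hxx, one_smul]

theorem inv_mul_smul_cross_sub_smul_cross_self {m : ℝ} (hm : m ≠ 0) {x : Fin 3 → ℝ} (hx : x ≠ 0)
    (g b : Fin 3 → ℝ) :
    ((m * (x ⬝ᵥ x))⁻¹ • x ⨯₃ (g - m • b)) ⨯₃ x
      = m⁻¹ • (1 - vecMulVec ((√(x ⬝ᵥ x))⁻¹ • x) ((√(x ⬝ᵥ x))⁻¹ • x)) *ᵥ g
        - (1 - vecMulVec ((√(x ⬝ᵥ x))⁻¹ • x) ((√(x ⬝ᵥ x))⁻¹ • x)) *ᵥ b := by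
  rw [mul_inv, mul_smul, LinearMap.map_smul₂, inv_dotProduct_smul_cross_cross_self hx, mulVec_sub,
    mulVec_smul, smul_sub, smul_smul, inv_mul_cancel₀ hm, one_smul]

theorem hinge_newton_general (m : ℝ) (hm : 0 < m)
    (x1 x2 f1 f2 θ1 θ2 ν1 ν2 a a0 a1 a2 f e1 e2 : Fin 3 → ℝ)
    (hx1 : x1 ≠ 0) (hx2 : x2 ≠ 0)
    (he1 : e1 = (Real.sqrt (∑ i, x1 i ^ 2))⁻¹ • x1)
    (he2 : e2 = (Real.sqrt (∑ i, x2 i ^ 2))⁻¹ • x2)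
    (ha : a = m⁻¹ • f - crossProduct θ1 ν1 - crossProduct θ2 ν2
        - m⁻¹ • (1 - vecMulVec e1 e1).mulVec f1
        - m⁻¹ • (1 - vecMulVec e2 e2).mulVec f2)
    (ha0 : a0 = (1 + vecMulVec e1 e1 + vecMulVec e2 e2)⁻¹.mulVec a)
    (ha1 : a1 = a0 +
        crossProduct ((m * ∑ i, x1 i ^ 2)⁻¹ • crossProduct x1 (f1 - m • a0)) x1
        + crossProduct θ1 ν1)
    (ha2 : a2 = a0 +
        crossProduct ((m * ∑ i, x2 i ^ 2)⁻¹ • crossProduct x2 (f2 - m • a0)) x2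
        + crossProduct θ2 ν2) :
    a0 + a1 + a2 = m⁻¹ • f := by
  simp only [sum_sq_eq_dotProduct_self] at he1 he2 ha1 ha2
  have hM : (1 + vecMulVec e1 e1 + vecMulVec e2 e2) *ᵥ a0 = a := by
    rw [ha0, mulVec_mulVec, mul_nonsing_inv _
      (posDef_one_add_vecMulVec_add_vecMulVec e1 e2).det_pos.ne'.isUnit, one_mulVec]
  rw [ha1, ha2, inv_mul_smul_cross_sub_smul_cross_self hm.ne' hx1,
    inv_mul_smul_cross_sub_smul_cross_self hm.ne' hx2, ← he1, ← he2]
  simp only [add_mulVec, sub_mulVec, one_mulVec] at hM ha ⊢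
  linear_combination (norm := module) hM + ha

theorem hinge_newton (m : ℝ) (hm : 0 < m)
    (x1 x2 f0 f1 f2 θ1 θ2 ν1 ν2 a a0 a1 a2 f e1 e2 : Fin 3 → ℝ)
    (hx1 : x1 ≠ 0) (hx2 : x2 ≠ 0)
    (he1 : e1 = (Real.sqrt (∑ i, x1 i ^ 2))⁻¹ • x1)
    (he2 : e2 = (Real.sqrt (∑ i, x2 i ^ 2))⁻¹ • x2)
    (hf : f = f0 + f1 + f2)
    (ha : a = m⁻¹ • f - crossProduct θ1 ν1 - crossProduct θ2 ν2
        - m⁻¹ • (1 - vecMulVec e1 e1).mulVec f1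
        - m⁻¹ • (1 - vecMulVec e2 e2).mulVec f2)
    (ha0 : a0 = (1 + vecMulVec e1 e1 + vecMulVec e2 e2)⁻¹.mulVec a)
    (ha1 : a1 = a0 +
        crossProduct ((m * ∑ i, x1 i ^ 2)⁻¹ • crossProduct x1 (f1 - m • a0)) x1
        + crossProduct θ1 ν1)
    (ha2 : a2 = a0 +
        crossProduct ((m * ∑ i, x2 i ^ 2)⁻¹ • crossProduct x2 (f2 - m • a0)) x2
        + crossProduct θ2 ν2) :
    a0 + a1 + a2 = m⁻¹ • f :=
  hinge_newton_general m hm x1 x2 f1 f2 θ1 θ2 ν1 ν2 a a0 a1 a2 f e1 e2 hx1 hx2 he1 he2 ha ha0 ha1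
    ha2
end
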